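/- arXiv:2010.09702 — 5 statements merged into one kernel-verified Lean document; each statement's English description precedes it below -/
import Mathlib

section
/- The map j from linear functionals on ℂ[x] to shift-invariant linear operators on ℂ[x], given by j(L)(p)(x) = L(T_x(p)), is a linear bijection with inverse 𝔏 ↦ (p ↦ 𝔏(p)(0)). -/
/-!
`j(L)` is obtained from the bivariate polynomial `p(y + x) ∈ ℂ[y][x]` by applying `L` to its
coefficients in `y`; evaluating at `x` then gives `L(T_x p)`. Since `ℂ` is infinite, a polynomial
is determined by its values, which yields uniqueness, and shift invariance of `j(L)` because
`T_{x+a} = T_x ∘ T_a`. The inverse formula is shift invariance evaluated at `0`.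
-/

open Polynomial

/-- A linear operator on `ℂ[x]` is shift-invariant if it commutes with every
shift `T_a : p ↦ p(· + a)`. -/
def IsShiftInvariant (T : Polynomial ℂ →ₗ[ℂ] Polynomial ℂ) : Prop :=
  ∀ (a : ℂ) (p : Polynomial ℂ), T (p.comp (X + C a)) = (T p).comp (X + C a)

namespace Polynomial

theorem eval_lsum_monomial_comp {R A : Type*} [CommSemiring R] [Semiring A] [Algebra R A]
    (L : A →ₗ[R] R) (Q : A[X]) (x : R) :
    (lsum (fun k => (monomial k).comp L) Q).eval x = L (Q.eval (algebraMap R A x)) := by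
  rw [lsum_apply, sum_def, eval_finsetSum, eval_eq_sum, sum_def, map_sum]
  refine Finset.sum_congr rfl fun k _ => ?_
  rw [LinearMap.comp_apply, eval_monomial, ← map_pow, ← Algebra.commutes, ← Algebra.smul_def,
    map_smul, smul_eq_mul, mul_comm]

variable {R : Type*} [CommRing R]

noncomputable def shiftOperatorOfFunctional (L : R[X] →ₗ[R] R) : R[X] →ₗ[R] R[X] :=
  lsum (fun k => (monomial k).comp L) ∘ₗ (aeval (C X + X : R[X][X])).toLinearMap

theorem eval_shiftOperatorOfFunctional (L : R[X] →ₗ[R] R) (p : R[X]) (x : R) :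
    (shiftOperatorOfFunctional L p).eval x = L (p.comp (X + C x)) := by
  rw [shiftOperatorOfFunctional, LinearMap.comp_apply, AlgHom.toLinearMap_apply,
    eval_lsum_monomial_comp, algebraMap_eq]
  congr 1
  induction p using Polynomial.induction_on' with
  | add p q hp hq => simp_all
  | monomial n a => simp [add_comm]

theorem isShiftInvariant_shiftOperatorOfFunctional (L : ℂ[X] →ₗ[ℂ] ℂ) :
    IsShiftInvariant (shiftOperatorOfFunctional L) := fun a p => funext fun x => by
  rw [eval_shiftOperatorOfFunctional, eval_comp, eval_shiftOperatorOfFunctional, comp_assoc]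
  simp [add_assoc]

end Polynomial

/-- The map `j` from linear functionals to shift-invariant operators,
`j(L)(p)(x) = L(T_x p)`, is a bijection (it is linear, and its inverse is
`𝔏 ↦ (p ↦ 𝔏(p)(0))`). -/
theorem functional_operator_bijection :
    -- `j` is well defined: for each functional `L` there is a unique
    -- shift-invariant linear operator `T` with `(T p)(x) = L(T_x p)`
    (∀ L : Polynomial ℂ →ₗ[ℂ] ℂ,
      ∃! T : Polynomial ℂ →ₗ[ℂ] Polynomial ℂ,
        IsShiftInvariant T ∧ ∀ (p : Polynomial ℂ) (x : ℂ),
          (T p).eval x = L (p.comp (X + C x))) ∧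
    -- `j` is linear
    (∀ (L₁ L₂ : Polynomial ℂ →ₗ[ℂ] ℂ) (c : ℂ)
      (T₁ T₂ : Polynomial ℂ →ₗ[ℂ] Polynomial ℂ),
      (∀ p x, (T₁ p).eval x = L₁ (p.comp (X + C x))) →
      (∀ p x, (T₂ p).eval x = L₂ (p.comp (X + C x))) →
      (∀ p x, ((T₁ + c • T₂) p).eval x = (L₁ + c • L₂) (p.comp (X + C x)))) ∧
    -- the inverse: every shift-invariant operator `T` equals `j` of the
    -- functional `p ↦ (T p)(0)`, so `j` is surjective with inverse `𝔏 ↦ 𝔏(·)(0)`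
    (∀ T : Polynomial ℂ →ₗ[ℂ] Polynomial ℂ, IsShiftInvariant T →
      ∀ (p : Polynomial ℂ) (x : ℂ),
        (T p).eval x = (T (p.comp (X + C x))).eval 0) := by
  refine ⟨fun L => ?existsUnique, ?linear, ?inverse⟩
  case existsUnique =>
    refine ⟨shiftOperatorOfFunctional L, ⟨isShiftInvariant_shiftOperatorOfFunctional L,
      eval_shiftOperatorOfFunctional L⟩, ?_⟩
    rintro T ⟨-, hT⟩
    exact LinearMap.ext fun p => funext fun x => by rw [hT, eval_shiftOperatorOfFunctional]
  case linear =>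
    intro L₁ L₂ c T₁ T₂ h₁ h₂ p x
    simp [h₁, h₂]
  case inverse =>
    intro T hT p x
    simp [hT x p, eval_comp]
end

section
/- Given a linear functional L on ℂ[x] with L(1) ≠ 0, there is a unique Appell sequence (pₙ) satisfying L(p₀) = 1 and L(pₙ) = 0 for all n ≥ 1. -/
open Polynomial

noncomputable def myAntideriv (p : Polynomial ℂ) : Polynomial ℂ :=
  p.sum fun k a => C (a / (k + 1)) * X ^ (k + 1)

lemma derivative_myAntideriv (p : Polynomial ℂ) : derivative (myAntideriv p) = p := by
  rw [myAntideriv, Polynomial.sum_def, map_sum]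
  conv_rhs => rw [p.as_sum_support]
  refine Finset.sum_congr rfl fun k _ => ?_
  have hk1 : (k : ℂ) + 1 ≠ 0 := Nat.cast_add_one_ne_zero k
  rw [derivative_C_mul, derivative_X_pow, ← mul_assoc, ← C_mul]
  push_cast
  rw [div_mul_cancel₀ _ hk1]
  simp [C_mul_X_pow_eq_monomial]

noncomputable def myAppell (L : Polynomial ℂ →ₗ[ℂ] ℂ) : ℕ → Polynomial ℂ
  | 0 => C (L 1)⁻¹
  | n + 1 =>
    (n + 1 : ℂ) • myAntideriv (myAppell L n)
      - C (L ((n + 1 : ℂ) • myAntideriv (myAppell L n)) / L 1)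

lemma L_C (L : Polynomial ℂ →ₗ[ℂ] ℂ) (c : ℂ) : L (C c) = c * L 1 := by
  have h : (C c : Polynomial ℂ) = c • 1 := by rw [smul_eq_C_mul, mul_one]
  rw [h, map_smul, smul_eq_mul]

lemma derivative_myAppell (L : Polynomial ℂ →ₗ[ℂ] ℂ) (n : ℕ) :
    derivative (myAppell L (n + 1)) = (n + 1 : ℂ) • myAppell L n := by
  show derivative ((n + 1 : ℂ) • myAntideriv (myAppell L n) - C _) = _
  rw [map_sub, derivative_C, sub_zero, derivative_smul, derivative_myAntideriv]

lemma L_myAppell_succ (L : Polynomial ℂ →ₗ[ℂ] ℂ) (hL : L 1 ≠ 0) (n : ℕ) :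
    L (myAppell L (n + 1)) = 0 := by
  show L ((n + 1 : ℂ) • myAntideriv (myAppell L n) - C _) = 0
  rw [map_sub, L_C, div_mul_cancel₀ _ hL, sub_self]

/-- Given a linear functional `L` on `ℂ[x]` with `L(1) ≠ 0`, there is a unique
Appell sequence `(pₙ)` with `L(p₀) = 1` and `L(pₙ) = 0` for `n ≥ 1`. -/
theorem exists_unique_appell_of_functional (L : Polynomial ℂ →ₗ[ℂ] ℂ)
    (hL : L 1 ≠ 0) :
    ∃! p : ℕ → Polynomial ℂ,
      (∃ c : ℂ, c ≠ 0 ∧ p 0 = C c) ∧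
      (∀ n : ℕ, derivative (p (n + 1)) = (n + 1 : ℂ) • p n) ∧
      L (p 0) = 1 ∧
      (∀ n : ℕ, 1 ≤ n → L (p n) = 0) := by
  refine ⟨myAppell L, ⟨⟨(L 1)⁻¹, inv_ne_zero hL, rfl⟩, derivative_myAppell L,
      ?_, fun n hn => ?_⟩, ?_⟩
  · show L (C (L 1)⁻¹) = 1
    rw [L_C, inv_mul_cancel₀ hL]
  · obtain ⟨m, rfl⟩ := Nat.exists_eq_add_of_le hn
    rw [Nat.add_comm]; exact L_myAppell_succ L hL m
  · rintro q ⟨⟨c, hc, h0⟩, hq, hq0, hqn⟩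
    funext n
    induction n with
    | zero =>
      have : c * L 1 = 1 := by rw [← L_C, ← h0, hq0]
      have hc' : c = (L 1)⁻¹ := by field_simp at this ⊢; linear_combination this
      rw [h0, hc']; rfl
    | succ n ih =>
      have hd : derivative (q (n + 1) - myAppell L (n + 1)) = 0 := by
        rw [map_sub, hq, derivative_myAppell, ih, sub_self]
      have hdeg := natDegree_eq_zero_of_derivative_eq_zero hd
      obtain ⟨d, hdd⟩ := natDegree_eq_zero.mp hdeg
      have hLd : L (q (n + 1) - myAppell L (n + 1)) = 0 := by
        rw [map_sub, hqn (n + 1) (Nat.le_add_left 1 n), L_myAppell_succ L hL, sub_self]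
      rw [← hdd, L_C] at hLd
      have : d = 0 := by
        rcases mul_eq_zero.mp hLd with h | h
        · exact h
        · exact absurd h hL
      have h0' : q (n + 1) - myAppell L (n + 1) = 0 := by rw [← hdd, this, map_zero]
      exact sub_eq_zero.mp h0'
end

section
/- Let L be a linear functional on ℂ[x] with L(1) ≠ 0 and let (pₙ) be an Appell sequence satisfying L(p₀) = 1 and L(pₙ) = 0 for n ≥ 1. Then L(pₙ(· + x₀)) = x₀ⁿ for all n ≥ 0 and all x₀ ∈ ℂ (the mean value property). -/
open Polynomial Finset

theorem appell_expand (p : ℕ → Polynomial ℂ)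
    (h0 : ∃ c : ℂ, c ≠ 0 ∧ p 0 = C c)
    (hd : ∀ n : ℕ, derivative (p (n + 1)) = (n + 1 : ℂ) • p n) :
    ∀ (n : ℕ) (x : ℂ), (p n).comp (C x + X) =
      ∑ k ∈ Finset.range (n+1), ((n.choose k : ℂ) * (p (n-k)).eval x) • X ^ k := by
  intro n
  induction n with
  | zero =>
    intro x
    obtain ⟨c, hc, hp0⟩ := h0
    simp [hp0, smul_eq_C_mul]
  | succ n ih =>
    intro x
    have hdf : derivative ((p (n+1)).comp (C x + X)) = ((n:ℂ)+1) • ((p n).comp (C x + X)) := by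
      rw [derivative_comp, hd n]
      simp [smul_comp]
    have hdg : derivative (∑ k ∈ Finset.range (n+2), (((n+1).choose k : ℂ) * (p (n+1-k)).eval x) • (X:Polynomial ℂ) ^ k) =
        ∑ j ∈ Finset.range (n+1), ((((n+1).choose (j+1) : ℂ)) * (p (n-j)).eval x * ((j:ℂ)+1)) • (X:Polynomial ℂ) ^ j := by
      rw [derivative_sum, Finset.sum_range_succ']
      simp only [derivative_smul, derivative_X_pow, pow_zero, derivative_one, CharP.cast_eq_zero, map_zero,
        zero_mul, smul_zero, add_zero]
      apply Finset.sum_congr rfl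
      intro j hj
      simp only [Nat.add_sub_cancel]
      rw [← smul_eq_C_mul, smul_smul]
      congr 1
      push_cast
      ring
    have hder : derivative ((p (n+1)).comp (C x + X)) =
        derivative (∑ k ∈ Finset.range (n+2), (((n+1).choose k : ℂ) * (p (n+1-k)).eval x) • (X:Polynomial ℂ) ^ k) := by
      rw [hdf, hdg, ih x, Finset.smul_sum]
      apply Finset.sum_congr rfl
      intro j hj
      rw [smul_smul]
      congr 1
      have hcomb : (n+1) * n.choose j = (n+1).choose (j+1) * (j+1) := Nat.add_one_mul_choose_eq n j
      have hc : ((n+1) * n.choose j : ℂ) = (((n+1).choose (j+1) * (j+1) : ℕ) : ℂ) := by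
        exact_mod_cast congrArg (Nat.cast : ℕ → ℂ) hcomb
      push_cast at hc
      linear_combination ((p (n-j)).eval x) * hc
    have heval : eval 0 ((p (n+1)).comp (C x + X)) =
        eval 0 (∑ k ∈ Finset.range (n+2), (((n+1).choose k : ℂ) * (p (n+1-k)).eval x) • (X:Polynomial ℂ) ^ k) := by
      rw [Finset.sum_range_succ']
      simp [eval_comp, eval_finset_sum, zero_pow]
    have hsub : derivative ((p (n+1)).comp (C x + X) -
        ∑ k ∈ Finset.range (n+2), (((n+1).choose k : ℂ) * (p (n+1-k)).eval x) • (X:Polynomial ℂ) ^ k) = 0 := by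
      rw [derivative_sub, hder, sub_self]
    have hnd := natDegree_eq_zero_of_derivative_eq_zero hsub
    obtain ⟨a, ha⟩ := natDegree_eq_zero.mp hnd
    have ha0 : a = 0 := by
      have h := congrArg (eval 0) ha
      simp only [eval_sub, eval_C, heval, sub_self] at h
      exact h
    have : (p (n+1)).comp (C x + X) -
        ∑ k ∈ Finset.range (n+2), (((n+1).choose k : ℂ) * (p (n+1-k)).eval x) • (X:Polynomial ℂ) ^ k = 0 := by
      rw [← ha, ha0, map_zero]
    exact sub_eq_zero.mp this

theorem appell_expand' (p : ℕ → Polynomial ℂ)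
    (h0 : ∃ c : ℂ, c ≠ 0 ∧ p 0 = C c)
    (hd : ∀ n : ℕ, derivative (p (n + 1)) = (n + 1 : ℂ) • p n)
    (n : ℕ) (x₀ : ℂ) :
    (p n).comp (X + C x₀) =
      ∑ k ∈ Finset.range (n+1), ((n.choose k : ℂ) * x₀ ^ k) • p (n - k) := by
  apply Polynomial.funext
  intro t
  have h := congrArg (eval x₀) (appell_expand p h0 hd n t)
  simp only [eval_comp, eval_add, eval_C, eval_X, eval_finset_sum, eval_smul, eval_pow,
    smul_eq_mul] at h ⊢
  rw [h]
  apply Finset.sum_congr rfl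
  intro k hk
  ring

/-- Mean value property: if `(pₙ)` is an Appell sequence with `L(p₀) = 1` and
`L(pₙ) = 0` for `n ≥ 1`, then `L(pₙ(· + x₀)) = x₀ⁿ` for all `n` and `x₀`. -/
theorem appell_mean_value_property (L : Polynomial ℂ →ₗ[ℂ] ℂ) (hL : L 1 ≠ 0)
    (p : ℕ → Polynomial ℂ)
    (h0 : ∃ c : ℂ, c ≠ 0 ∧ p 0 = C c)
    (hd : ∀ n : ℕ, derivative (p (n + 1)) = (n + 1 : ℂ) • p n)
    (hL0 : L (p 0) = 1)
    (hLn : ∀ n : ℕ, 1 ≤ n → L (p n) = 0) :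
    ∀ (n : ℕ) (x₀ : ℂ), L ((p n).comp (X + C x₀)) = x₀ ^ n := by
  intro n x₀
  rw [appell_expand' p h0 hd n x₀, map_sum]
  simp only [map_smul, smul_eq_mul]
  rw [Finset.sum_eq_single n]
  · simp [hL0]
  · intro k hk hkn
    have h1 : 1 ≤ n - k := by
      simp only [Finset.mem_range] at hk
      omega
    rw [hLn (n - k) h1, mul_zero]
  · intro h
    exact absurd (Finset.self_mem_range_succ n) h
end

section
/- For every n ≥ 0, the n-th Bernoulli polynomial satisfies Bₙ(x) = ∑_{j=0}^{n} ((−1)^j/(j+1)) Δ^j(xⁿ), where Δ is the forward difference operator Δ(p)(x) = p(x+1) − p(x). -/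
open Polynomial Finset

/-- The forward difference operator `Δ(p)(x) = p(x+1) − p(x)` on polynomials. -/
noncomputable def polyFwdDiff (p : Polynomial ℚ) : Polynomial ℚ :=
  p.comp (X + 1) - p

/-!
By Taylor's formula the shift `p(X) ↦ p(X + 1)` is `exp(D)` for `D = d/dX`, so `Δ = e^D - 1` and
the right-hand side is `G(e^D - 1) Xⁿ` with `G(s) = log(1 + s)/s = ∑ (-1)^j s^j/(j + 1)`.
Since `log(1 + (e^t - 1)) = t`, the series `G(e^t - 1)` is `t/(e^t - 1) = ∑ B_k t^k/k!`,
and `(∑ B_k D^k/k!) Xⁿ = ∑ C(n, k) B_k X^(n-k) = Bₙ`. Truncating at degree `n` is harmless: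
`D^k Xⁿ = 0` for `k > n`, and `(e^t - 1)^j` has order `j`.
-/

open scoped PowerSeries

namespace PowerSeries

section CommRing

variable {R : Type*} [CommRing R]

theorem coeff_pow_eq_zero_of_lt {a : R⟦X⟧} (ha : constantCoeff a = 0) {k d : ℕ} (h : k < d) :
    coeff k (a ^ d) = 0 :=
  X_pow_dvd_iff.mp (pow_dvd_pow_of_dvd (X_dvd_iff.mpr ha) d) k h

theorem coeff_subst_eq_coeff_sum {a : R⟦X⟧} (ha : constantCoeff a = 0) (f : R⟦X⟧) {k N : ℕ}
    (hk : k < N) : coeff k (f.subst a) = coeff k (∑ j ∈ range N, coeff j f • a ^ j) := by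
  rw [coeff_subst' (.of_constantCoeff_zero' ha), map_sum,
    finsum_eq_sum_of_support_subset (s := range N)]
  · simp only [map_smul]
  · intro d hd
    by_contra hdN
    simp only [Function.mem_support, coe_range, Set.mem_Iio, not_lt] at hd hdN
    exact hd (by rw [coeff_pow_eq_zero_of_lt ha (hk.trans_le hdN), smul_zero])

end CommRing

variable {A : Type*} [CommRing A] [Algebra ℚ A]

theorem mk_neg_one_pow_mul_one_add_X :
    (mk fun n ↦ algebraMap ℚ A ((-1) ^ n)) * (1 + X) = 1 := by
  ext n
  rcases n with _ | n
  · simp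
  · simp [mul_add, pow_succ]

theorem logOf_exp : logOf (exp A) = X := by
  have hu := HasSubst.exp_sub_one (A := A)
  have : IsAddTorsionFree A := .of_module_rat A
  refine derivative.ext ?_ ?_
  · rw [logOf_eq, derivative_subst hu, deriv_log, map_sub, derivative_exp, derivative_one,
      sub_zero, derivative_X]
    have h := congrArg (subst (exp A - 1)) (mk_neg_one_pow_mul_one_add_X (A := A))
    rw [← coe_substAlgHom hu] at h ⊢
    simpa [substAlgHom_X] using h
  · rw [constantCoeff_logOf constantCoeff_exp]
    simp

variable (A) in
noncomputable def logOneAddDivX : A⟦X⟧ := mk fun n ↦ algebraMap ℚ A ((-1) ^ n / (n + 1))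

theorem X_mul_logOneAddDivX : X * logOneAddDivX A = log A := by
  ext n
  rcases n with _ | n
  · simp
  · rw [coeff_succ_X_mul, logOneAddDivX, coeff_mk, coeff_log, if_neg n.succ_ne_zero]
    push_cast
    ring_nf

theorem bernoulliPowerSeries_eq_subst [IsDomain A] :
    bernoulliPowerSeries A = (logOneAddDivX A).subst (exp A - 1) := by
  have hu := HasSubst.exp_sub_one (A := A)
  have hu0 : exp A - 1 ≠ 0 := fun h ↦ by simpa using congrArg (coeff 1) h
  refine mul_left_cancel₀ hu0 ?_
  calc (exp A - 1) * bernoulliPowerSeries A = X := by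
        rw [mul_comm, bernoulliPowerSeries_mul_exp_sub_one]
    _ = (X * logOneAddDivX A).subst (exp A - 1) := by
        rw [X_mul_logOneAddDivX, ← logOf_eq, logOf_exp]
    _ = (exp A - 1) * (logOneAddDivX A).subst (exp A - 1) := by
        rw [← coe_substAlgHom hu, map_mul, coe_substAlgHom, subst_X hu]

end PowerSeries

theorem taylor_pow_eq_taylor_mul {R : Type*} [CommSemiring R] (r : R) (i : ℕ) :
    (taylor r : Module.End R R[X]) ^ i = taylor (i * r) := by
  induction i with
  | zero => ext p; simp
  | succ i ih =>
    refine LinearMap.ext fun p ↦ ?_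
    rw [pow_succ', Module.End.mul_apply, ih, taylor_taylor]
    push_cast
    ring_nf

theorem iterate_derivative_X_pow_eq_monomial {R : Type*} [CommSemiring R] (k n : ℕ) :
    derivative^[k] (X ^ n : R[X]) = monomial (n - k) (k.factorial * n.choose k : R) := by
  rw [iterate_derivative_X_pow_eq_smul, Nat.descFactorial_eq_factorial_mul_choose,
    ← C_mul_X_pow_eq_monomial, smul_eq_C_mul]
  push_cast
  rfl

/-- `φ(d/dX) Xⁿ` for a power series `φ`; only the coefficients of `φ` up to `n` contribute. -/
noncomputable def derivOpXPow (n : ℕ) : ℚ⟦X⟧ →ₗ[ℚ] ℚ[X] :=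
  ∑ k ∈ range (n + 1), (PowerSeries.coeff k).smulRight (derivative^[k] (X ^ n))

theorem derivOpXPow_apply (n : ℕ) (φ : ℚ⟦X⟧) :
    derivOpXPow n φ = ∑ k ∈ range (n + 1), PowerSeries.coeff k φ • derivative^[k] (X ^ n) := by
  simp [derivOpXPow]

theorem derivOpXPow_congr {n : ℕ} {φ ψ : ℚ⟦X⟧}
    (h : ∀ k ≤ n, PowerSeries.coeff k φ = PowerSeries.coeff k ψ) :
    derivOpXPow n φ = derivOpXPow n ψ := by
  simp only [derivOpXPow_apply]
  exact sum_congr rfl fun k hk ↦ by rw [h k (mem_range_succ_iff.mp hk)]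

theorem derivOpXPow_eq_sum_monomial (n : ℕ) (φ : ℚ⟦X⟧) :
    derivOpXPow n φ = ∑ k ∈ range (n + 1),
      monomial (n - k) (PowerSeries.coeff k φ * k.factorial * n.choose k) := by
  rw [derivOpXPow_apply]
  refine sum_congr rfl fun k _ ↦ ?_
  rw [iterate_derivative_X_pow_eq_monomial, smul_monomial, smul_eq_mul, mul_assoc]

theorem derivOpXPow_bernoulliPowerSeries (n : ℕ) :
    derivOpXPow n (bernoulliPowerSeries ℚ) = Polynomial.bernoulli n := by
  rw [derivOpXPow_eq_sum_monomial, Polynomial.bernoulli]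
  refine sum_congr rfl fun k _ ↦ ?_
  have hk : (k.factorial : ℚ) ≠ 0 := by positivity
  simp [bernoulliPowerSeries, hk]

theorem derivOpXPow_rescale_exp (n : ℕ) (a : ℚ) :
    derivOpXPow n (PowerSeries.rescale a (PowerSeries.exp ℚ)) = taylor a (X ^ n) := by
  rw [derivOpXPow_eq_sum_monomial, taylor_X_pow, add_comm X, add_pow]
  refine sum_congr rfl fun k _ ↦ ?_
  have hk : (k.factorial : ℚ) ≠ 0 := by positivity
  simp [PowerSeries.coeff_rescale, PowerSeries.coeff_exp, hk, ← C_mul_X_pow_eq_monomial]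
  ring

theorem aeval_taylor_one_apply_X_pow (n : ℕ) (q : ℚ[X]) :
    aeval (taylor 1 : Module.End ℚ ℚ[X]) q (X ^ n) =
      derivOpXPow n (aeval (PowerSeries.exp ℚ) q) := by
  induction q using Polynomial.induction_on' with
  | add p q hp hq => simp only [map_add, LinearMap.add_apply, hp, hq]
  | monomial i c =>
    rw [aeval_monomial, aeval_monomial, PowerSeries.exp_pow_eq_rescale_exp,
      taylor_pow_eq_taylor_mul, Algebra.algebraMap_eq_smul_one, Algebra.algebraMap_eq_smul_one,
      smul_one_mul, smul_one_mul, LinearMap.smul_apply, map_smul, derivOpXPow_rescale_exp, mul_one]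

theorem polyFwdDiff_iterate (j : ℕ) :
    polyFwdDiff^[j] = aeval (taylor 1 : Module.End ℚ ℚ[X]) ((X - 1 : ℚ[X]) ^ j) := by
  have hΔ : polyFwdDiff = ⇑(taylor 1 - 1 : Module.End ℚ ℚ[X]) := by
    ext1 p
    simp [polyFwdDiff, taylor_apply]
  rw [hΔ, ← Module.End.coe_pow]
  simp

theorem polyFwdDiff_iterate_X_pow (j n : ℕ) :
    polyFwdDiff^[j] (X ^ n) = derivOpXPow n ((PowerSeries.exp ℚ - 1) ^ j) := by
  rw [polyFwdDiff_iterate, aeval_taylor_one_apply_X_pow]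
  simp

/-- `Bₙ = ∑_{j=0}^n ((−1)^j/(j+1)) Δ^j(Xⁿ)`. -/
theorem bernoulli_eq_sum_polyFwdDiff (n : ℕ) :
    Polynomial.bernoulli n =
      ∑ j ∈ range (n + 1), ((-1 : ℚ) ^ j / (j + 1)) • polyFwdDiff^[j] (X ^ n) := by
  have hcoeff : ∀ k ≤ n,
      PowerSeries.coeff k
          (∑ j ∈ range (n + 1), ((-1 : ℚ) ^ j / (j + 1)) • (PowerSeries.exp ℚ - 1) ^ j) =
        PowerSeries.coeff k (bernoulliPowerSeries ℚ) := by
    intro k hk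
    rw [PowerSeries.bernoulliPowerSeries_eq_subst,
      PowerSeries.coeff_subst_eq_coeff_sum (by simp) _ (Nat.lt_succ_of_le hk)]
    simp [PowerSeries.logOneAddDivX]
  simp_rw [polyFwdDiff_iterate_X_pow, ← map_smul, ← map_sum]
  rw [derivOpXPow_congr hcoeff, derivOpXPow_bernoulliPowerSeries]
end

section
/- The Bernoulli polynomials admit the integral representation Bₙ(x) = xⁿ − (n/2)x^{n−1} − i·n·∫₀^∞ ((x+is)^{n−1} − (x−is)^{n−1})/(e^{2πs} − 1) ds for all n ≥ 1. -/
/-!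
Expanding `(x + is)^{n-1} - (x - is)^{n-1}` binomially leaves only odd powers `s^{2j-1}`. Writing
`1/(e^t - 1) = ∑_{k ≥ 1} e^{-kt}` and integrating termwise gives Riemann's formula
`∫₀^∞ t^{s-1}/(e^t - 1) dt = Γ(s) ζ(s)`, and Euler's evaluation of `ζ(2j)` turns the odd moments
into `∫₀^∞ s^{2j-1}/(e^{2πs} - 1) ds = (-1)^{j+1} B_{2j}/(4j)`. Against
`Bₙ(x) = ∑ᵢ C(n,i) Bᵢ x^{n-i}` the terms then match one by one: `i = 0` and `i = 1` give
`xⁿ - (n/2) x^{n-1}`, the odd `i ≥ 3` vanish on both sides, and `C(n, 2j) B_{2j}` is matched by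
`n C(n-1, 2j-1)/(2j) = C(n, 2j)`.
-/

open Polynomial Real
open MeasureTheory Set Filter Asymptotics Finset

lemma hasSum_exp_neg_nat_succ_mul {t : ℝ} (ht : 0 < t) :
    HasSum (fun n : ℕ => rexp (-(n + 1) * t)) (1 / (rexp t - 1)) := by
  have hr : rexp (-t) < 1 := Real.exp_lt_one_iff.mpr (neg_lt_zero.mpr ht)
  have hsum := (hasSum_geometric_of_lt_one (Real.exp_nonneg _) hr).mul_left (rexp (-t))
  have hval : rexp (-t) * (1 - rexp (-t))⁻¹ = 1 / (rexp t - 1) := by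
    have : rexp t - 1 ≠ 0 := (sub_pos.mpr (Real.one_lt_exp_iff.mpr ht)).ne'
    rw [Real.exp_neg]
    field_simp
  rw [hval] at hsum
  refine hsum.congr_fun fun n => ?_
  rw [← Real.exp_nat_mul, ← Real.exp_add]
  ring_nf

lemma one_div_exp_sub_one_pos {t : ℝ} (ht : 0 < t) : 0 < 1 / (rexp t - 1) :=
  one_div_pos.mpr (sub_pos.mpr (Real.one_lt_exp_iff.mpr ht))

lemma one_div_exp_sub_one_le_inv {t : ℝ} (ht : 0 < t) : 1 / (rexp t - 1) ≤ t⁻¹ := by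
  rw [one_div]
  exact inv_anti₀ ht (by linarith [Real.add_one_le_exp t])

lemma one_div_exp_sub_one_le_two_mul_exp_neg {t : ℝ} (ht : Real.log 2 ≤ t) :
    1 / (rexp t - 1) ≤ 2 * rexp (-t) := by
  have h2 : 2 ≤ rexp t := by simpa [Real.exp_log] using Real.exp_le_exp.mpr ht
  rw [Real.exp_neg, div_le_iff₀ (by linarith)]
  field_simp
  linarith

lemma mellinConvergent_one_div_exp_sub_one {s : ℂ} (hs : 1 < s.re) :
    MellinConvergent (fun t : ℝ => 1 / ((rexp t : ℂ) - 1)) s := by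
  have hreal : (fun t : ℝ => 1 / ((rexp t : ℂ) - 1)) = fun t => ((1 / (rexp t - 1) : ℝ) : ℂ) := by
    ext t
    push_cast
    rfl
  rw [hreal]
  refine mellinConvergent_of_isBigO_rpow_exp one_pos ?_ ?_ ?_ hs
  · refine ContinuousOn.locallyIntegrableOn ?_ measurableSet_Ioi
    refine Complex.continuous_ofReal.comp_continuousOn (continuousOn_const.div ?_ fun t ht => ?_)
    · fun_prop
    · exact (sub_pos.mpr (Real.one_lt_exp_iff.mpr ht)).ne'
  · refine Complex.isBigO_ofReal_left.mpr (IsBigO.of_bound 2 ?_)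
    filter_upwards [eventually_ge_atTop (Real.log 2), eventually_gt_atTop 0] with t ht ht₀
    rw [Real.norm_eq_abs, Real.norm_eq_abs, abs_of_pos (one_div_exp_sub_one_pos ht₀), neg_one_mul,
      Real.abs_exp]
    exact one_div_exp_sub_one_le_two_mul_exp_neg ht
  · refine Complex.isBigO_ofReal_left.mpr (IsBigO.of_bound 1 ?_)
    filter_upwards [self_mem_nhdsWithin] with t (ht : 0 < t)
    rw [Real.norm_eq_abs, Real.norm_eq_abs, abs_of_pos (one_div_exp_sub_one_pos ht),
      Real.rpow_neg_one, one_mul, abs_of_pos (inv_pos.mpr ht)]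
    exact one_div_exp_sub_one_le_inv ht

theorem mellin_one_div_exp_sub_one {s : ℂ} (hs : 1 < s.re) :
    mellin (fun t : ℝ => 1 / ((rexp t : ℂ) - 1)) s = Complex.Gamma s * riemannZeta s := by
  have hsum := hasSum_mellin (a := fun _ : ℕ => 1) (p := fun n => n + 1)
    (F := fun t : ℝ => 1 / ((rexp t : ℂ) - 1)) (fun n => Or.inr (by positivity)) (by linarith)
    (fun t ht => ?_) ?_
  · rw [← hsum.tsum_eq, zeta_eq_tsum_one_div_nat_add_one_cpow hs, ← tsum_mul_left]
    push_cast
    simp only [mul_one, mul_one_div]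
  · simpa using Complex.hasSum_ofReal.mpr (hasSum_exp_neg_nat_succ_mul ht)
  · refine ((Real.summable_one_div_nat_add_rpow 1 s.re).mpr hs).congr fun n => ?_
    rw [abs_of_pos (by positivity), norm_one]

lemma integrableOn_pow_div_exp_mul_sub_one {a : ℝ} (ha : 0 < a) {k : ℕ} (hk : k ≠ 0) :
    IntegrableOn (fun t : ℝ => (t : ℂ) ^ k / ((rexp (a * t) : ℂ) - 1)) (Ioi 0) := by
  have hs : 1 < ((k : ℂ) + 1).re := by simpa using Nat.pos_of_ne_zero hk
  have := (MellinConvergent.comp_mul_left (f := fun t : ℝ => 1 / ((rexp t : ℂ) - 1)) ha).mpr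
    (mellinConvergent_one_div_exp_sub_one hs)
  refine this.congr_fun (fun t _ => ?_) measurableSet_Ioi
  simp only [add_sub_cancel_right, Complex.cpow_natCast, smul_eq_mul, mul_one_div]

theorem integral_pow_div_exp_mul_sub_one {a : ℝ} (ha : 0 < a) {k : ℕ} (hk : k ≠ 0) :
    ∫ t in Ioi (0 : ℝ), (t : ℂ) ^ k / ((rexp (a * t) : ℂ) - 1) =
      k.factorial * riemannZeta (k + 1) / (a : ℂ) ^ (k + 1) := by
  have hs : 1 < ((k : ℂ) + 1).re := by simpa using Nat.pos_of_ne_zero hk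
  have hmellin : ∫ t in Ioi (0 : ℝ), (t : ℂ) ^ k / ((rexp (a * t) : ℂ) - 1) =
      mellin (fun t : ℝ => 1 / ((rexp (a * t) : ℂ) - 1)) (k + 1) := by
    refine setIntegral_congr_fun measurableSet_Ioi fun t _ => ?_
    rw [smul_eq_mul, add_sub_cancel_right, Complex.cpow_natCast, mul_one_div]
  have hpow : (a : ℂ) ^ (-((k : ℂ) + 1)) = ((a : ℂ) ^ (k + 1))⁻¹ := by
    rw [Complex.cpow_neg, ← Complex.cpow_natCast]
    push_cast
    rfl
  rw [hmellin, mellin_comp_mul_left (fun t : ℝ => 1 / ((rexp t : ℂ) - 1)) _ ha,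
    mellin_one_div_exp_sub_one hs, Complex.Gamma_nat_eq_factorial, smul_eq_mul, hpow]
  ring

theorem integral_pow_div_exp_two_pi_mul_sub_one {j : ℕ} (hj : j ≠ 0) :
    ∫ t in Ioi (0 : ℝ), (t : ℂ) ^ (2 * j - 1) / ((rexp (2 * π * t) : ℂ) - 1) =
      (-1) ^ (j + 1) * _root_.bernoulli (2 * j) / (4 * j) := by
  obtain ⟨i, rfl⟩ : ∃ i, j = i + 1 := Nat.exists_eq_succ_of_ne_zero hj
  rw [show 2 * (i + 1) - 1 = 2 * i + 1 by omega,
    integral_pow_div_exp_mul_sub_one Real.two_pi_pos (k := 2 * i + 1) (by omega),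
    show ((2 * i + 1 : ℕ) : ℂ) + 1 = 2 * ((i + 1 : ℕ) : ℂ) by push_cast; ring,
    riemannZeta_two_mul_nat hj, show 2 * (i + 1) - 1 = 2 * i + 1 by omega,
    show 2 * (i + 1) = 2 * i + 1 + 1 by ring, Nat.factorial_succ (2 * i + 1)]
  push_cast
  have : (π : ℂ) ≠ 0 := by exact_mod_cast Real.pi_ne_zero
  have : ((2 * i + 1).factorial : ℂ) ≠ 0 := by exact_mod_cast (2 * i + 1).factorial_ne_zero
  have : 2 * (i : ℂ) + 1 + 1 ≠ 0 := by exact_mod_cast (2 * i + 1).succ_ne_zero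
  field_simp
  ring

theorem add_pow_sub_sub_pow {R : Type*} [CommRing R] (x y : R) (m : ℕ) :
    (x + y) ^ m - (x - y) ^ m =
      ∑ k ∈ range (m + 1), m.choose k * x ^ (m - k) * (1 - (-1) ^ k) * y ^ k := by
  rw [add_comm x, show x - y = -y + x by ring, add_pow, add_pow, ← sum_sub_distrib]
  refine sum_congr rfl fun k _ => ?_
  rw [neg_pow]
  ring

theorem bernoulli_map_eval {K : Type*} [Field K] [CharZero K] (n : ℕ) (x : K) :
    ((Polynomial.bernoulli n).map (algebraMap ℚ K)).eval x =
      ∑ i ∈ range (n + 1), (_root_.bernoulli i : K) * n.choose i * x ^ (n - i) := by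
  simp [Polynomial.bernoulli]

theorem integral_add_pow_sub_sub_pow_div_exp_mul_sub_one {a : ℝ} (ha : 0 < a) (x : ℂ) (m : ℕ) :
    ∫ s in Ioi (0 : ℝ), ((x + Complex.I * s) ^ m - (x - Complex.I * s) ^ m) /
        ((rexp (a * s) : ℂ) - 1) =
      ∑ k ∈ range (m + 1), m.choose k * x ^ (m - k) * (1 - (-1) ^ k) * Complex.I ^ k *
        ∫ s in Ioi (0 : ℝ), (s : ℂ) ^ k / ((rexp (a * s) : ℂ) - 1) := by
  have hexpand : ∀ s : ℝ, ((x + Complex.I * s) ^ m - (x - Complex.I * s) ^ m) /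
      ((rexp (a * s) : ℂ) - 1) = ∑ k ∈ range (m + 1),
        m.choose k * x ^ (m - k) * (1 - (-1) ^ k) * Complex.I ^ k *
          ((s : ℂ) ^ k / ((rexp (a * s) : ℂ) - 1)) := fun s => by
    rw [add_pow_sub_sub_pow, sum_div]
    refine sum_congr rfl fun k _ => ?_
    ring
  simp_rw [hexpand]
  rw [integral_finsetSum]
  · simp_rw [integral_const_mul]
  · intro k _
    rcases eq_or_ne k 0 with rfl | hk
    · simp
    · exact (integrableOn_pow_div_exp_mul_sub_one ha hk).const_mul _

theorem bernoulli_succ_mul_choose_succ_eq_integral (m : ℕ) {k : ℕ} (hk : k ≠ 0) :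
    (_root_.bernoulli (k + 1) : ℂ) * (m + 1).choose (k + 1) =
      -(Complex.I * (m + 1)) * (m.choose k * (1 - (-1) ^ k) * Complex.I ^ k *
        ∫ s in Ioi (0 : ℝ), (s : ℂ) ^ k / ((rexp (2 * π * s) : ℂ) - 1)) := by
  rcases Nat.even_or_odd k with hev | ⟨j, rfl⟩
  · rw [bernoulli_eq_zero_of_odd hev.add_one (by omega), hev.neg_one_pow]
    simp
  · have hJ := integral_pow_div_exp_two_pi_mul_sub_one (j := j + 1) j.succ_ne_zero
    rw [show 2 * (j + 1) - 1 = 2 * j + 1 by omega] at hJ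
    have hchoose : ((m + 1 : ℕ) : ℂ) * m.choose (2 * j + 1) =
        (m + 1).choose (2 * j + 1 + 1) * (2 * j + 2) := by
      exact_mod_cast Nat.add_one_mul_choose_eq m (2 * j + 1)
    have hI : Complex.I ^ (2 * j + 1) = (-1) ^ j * Complex.I := by
      rw [pow_succ, pow_mul, Complex.I_sq]
    have hj : (j : ℂ) + 1 ≠ 0 := by exact_mod_cast j.succ_ne_zero
    have hsign : (-1 : ℂ) ^ j * (-1) ^ (j + 1 + 1) = 1 := by
      rw [← pow_add]
      exact Even.neg_one_pow ⟨j + 1, by ring⟩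
    rw [show 2 * j + 1 + 1 = 2 * (j + 1) by ring] at hchoose ⊢
    rw [hJ, hI, Odd.neg_one_pow ⟨j, rfl⟩]
    push_cast at hchoose ⊢
    field_simp
    rw [Complex.I_sq]
    linear_combination (-2 * (_root_.bernoulli (2 * (j + 1)) : ℂ)) * hchoose -
      2 * (_root_.bernoulli (2 * (j + 1)) : ℂ) * (m + 1) * m.choose (2 * j + 1) * hsign

/-- Integral representation of the Bernoulli polynomials:
`Bₙ(x) = xⁿ − (n/2) x^{n−1} − i n ∫₀^∞ ((x+is)^{n−1} − (x−is)^{n−1})/(e^{2πs} − 1) ds`. -/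
theorem bernoulli_integral_representation (n : ℕ) (hn : 1 ≤ n) (x : ℂ) :
    ((Polynomial.bernoulli n).map (algebraMap ℚ ℂ)).eval x =
      x ^ n - (n / 2 : ℂ) * x ^ (n - 1) -
        Complex.I * n *
          ∫ s in Set.Ioi (0 : ℝ),
            ((x + Complex.I * s) ^ (n - 1) - (x - Complex.I * s) ^ (n - 1)) /
              (Real.exp (2 * π * s) - 1) := by
  obtain ⟨m, rfl⟩ : ∃ m, n = m + 1 := ⟨n - 1, by omega⟩
  rw [Nat.add_sub_cancel, bernoulli_map_eval,
    integral_add_pow_sub_sub_pow_div_exp_mul_sub_one Real.two_pi_pos]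
  have hterm : ∀ k ∈ range m,
      (_root_.bernoulli (k + 1 + 1) : ℂ) * (m + 1).choose (k + 1 + 1) * x ^ (m + 1 - (k + 1 + 1)) =
        -(Complex.I * (m + 1 : ℕ)) * (m.choose (k + 1) * x ^ (m - (k + 1)) *
          (1 - (-1) ^ (k + 1)) * Complex.I ^ (k + 1) *
            ∫ s in Ioi (0 : ℝ), (s : ℂ) ^ (k + 1) / ((rexp (2 * π * s) : ℂ) - 1)) := fun k _ => by
    rw [show m + 1 - (k + 1 + 1) = m - (k + 1) by omega, Nat.cast_succ]
    linear_combination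
      x ^ (m - (k + 1)) * bernoulli_succ_mul_choose_succ_eq_integral m (k := k + 1) (by omega)
  rw [sum_range_succ', sum_range_succ', sum_range_succ', sum_congr rfl hterm, ← mul_sum]
  simp only [zero_add, _root_.bernoulli_zero, _root_.bernoulli_one, Nat.choose_zero_right,
    Nat.choose_one_right, Nat.sub_zero, Nat.add_sub_cancel, pow_zero, sub_self, mul_zero, zero_mul,
    Nat.cast_succ]
  push_cast
  ring
end
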